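/- arXiv:2202.11601 — 3 statements merged into one kernel-verified Lean document; each statement's English description precedes it below -/
import Mathlib

section
/- (Proposition 6.3, generic correctness method) Let φ be a threshold predicate a1x1+…+avxv ≥ c or a remainder predicate a1x1+…+avxv ≡ c (mod θ) over variables x1,…,xv, and let P=(Q,δ,I,O,H) be a population computer such that Q is a finite set of integers containing 0 and all the coefficients a1,…,av, I = {a1,…,av}, and supp(H) ⊆ {0}. Suppose: (1) P is bounded; (2) every step C→C' of P satisfies that C and C' are equivalent with respect to φ; (3) every terminal configuration reachable from some initial configuration is well-supported with respect to φ; (4) for every S⊆Q, O(S)=1 if the multiset S (each element once) satisfies φ and O(S)=0 otherwise. Then P decides φ: for every x ∈ ℕ^v, the input configuration consisting of x_i agents in state a_i (for i=1,…,v) has output 1 if φ(x)=1 and output 0 otherwise. -/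
open scoped ENNReal Classical

namespace PaperPP

/-- Population computers (Angluin-style generalization). -/
structure PopComputer (σ : Type) where
  Q : Finset σ
  δ : Finset (Multiset σ × Multiset σ)
  I : Finset σ
  O : Finset σ → Option Bool
  H : Multiset σ
  delta_mem : ∀ t ∈ δ, ∀ q ∈ t.1 + t.2, q ∈ Q
  delta_card : ∀ t ∈ δ, Multiset.card t.2 = Multiset.card t.1 ∧ 2 ≤ Multiset.card t.1
  delta_supp : ∀ t ∈ δ, ∃ a b : σ, ∀ q ∈ t.1, q = a ∨ q = b
  delta_fun : ∀ t ∈ δ, ∀ u ∈ δ, t.1 = u.1 → t.2 = u.2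
  I_sub : I ⊆ Q
  H_mem : ∀ q ∈ H, q ∈ Q ∧ q ∉ I

variable {σ : Type}

def Step (P : PopComputer σ) (C C' : Multiset σ) : Prop :=
  ∃ t ∈ P.δ, t.1 ≤ C ∧ C' = C - t.1 + t.2

def Reaches (P : PopComputer σ) : Multiset σ → Multiset σ → Prop :=
  Relation.ReflTransGen (Step P)

def Terminal (P : PopComputer σ) (C : Multiset σ) : Prop :=
  ∀ t ∈ P.δ, ¬ t.1 ≤ C

def IsInput (P : PopComputer σ) (C : Multiset σ) : Prop :=
  ∀ q ∈ C, q ∈ P.I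

def Initial (P : PopComputer σ) (CI C0 : Multiset σ) : Prop :=
  ∃ CH : Multiset σ, (∀ q ∈ CH, q ∈ P.H) ∧ P.H ≤ CH ∧ C0 = CI + CH

def ReachableConfig (P : PopComputer σ) (C : Multiset σ) : Prop :=
  ∃ CI C0, IsInput P CI ∧ Initial P CI C0 ∧ Reaches P C0 C

def IsRun (P : PopComputer σ) (f : ℕ → Multiset σ) : Prop :=
  ∀ i, Step P (f i) (f (i + 1)) ∨ (Terminal P (f i) ∧ f (i + 1) = f i)

def FairRun (P : PopComputer σ) (f : ℕ → Multiset σ) : Prop :=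
  IsRun P f ∧ ∀ C : Multiset σ, {i | Reaches P (f i) C}.Infinite → ∃ j, f j = C

def StabilizesTo [DecidableEq σ] (P : PopComputer σ) (f : ℕ → Multiset σ) (b : Bool) : Prop :=
  ∃ i, ∀ C, Reaches P (f i) C → P.O C.toFinset = some b

def HasOutput [DecidableEq σ] (P : PopComputer σ) (CI : Multiset σ) (b : Bool) : Prop :=
  ∀ C0 f, Initial P CI C0 → FairRun P f → f 0 = C0 → StabilizesTo P f b

def Decides [DecidableEq σ] (P : PopComputer σ) (φ : Multiset σ → Bool) : Prop :=
  ∀ CI, IsInput P CI → HasOutput P CI (φ CI)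

def Bounded (P : PopComputer σ) : Prop :=
  ¬ ∃ f : ℕ → Multiset σ,
      (∃ CI, IsInput P CI ∧ Initial P CI (f 0)) ∧ ∀ i, Step P (f i) (f (i + 1))

def Terminating (P : PopComputer σ) : Prop :=
  ∀ f : ℕ → Multiset σ, (∃ CI, IsInput P CI ∧ Initial P CI (f 0)) → FairRun P f →
    ∃ i, Terminal P (f i)

def Binary (P : PopComputer σ) : Prop := ∀ t ∈ P.δ, Multiset.card t.1 = 2

def ConsensusOutput [DecidableEq σ] (P : PopComputer σ) : Prop :=
  ∃ Q1 : Finset σ, Q1 ⊆ P.Q ∧ ∀ S : Finset σ, S ⊆ P.Q → S.Nonempty →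
    P.O S = if S ⊆ Q1 then some true else if S ⊆ P.Q \ Q1 then some false else none

def MarkedConsensusOutput [DecidableEq σ] (P : PopComputer σ) : Prop :=
  ∃ Q0 Q1 : Finset σ, Q0 ⊆ P.Q ∧ Q1 ⊆ P.Q ∧ Disjoint Q0 Q1 ∧
    ∀ S : Finset σ, S ⊆ P.Q → S.Nonempty →
      P.O S = if (S ∩ Q1).Nonempty ∧ S ∩ Q0 = ∅ then some true
        else if (S ∩ Q0).Nonempty ∧ S ∩ Q1 = ∅ then some false else none

def IsProtocol [DecidableEq σ] (P : PopComputer σ) : Prop :=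
  Binary P ∧ P.H = 0 ∧ ConsensusOutput P

/-! Boolean circuits, used to measure the size of output functions. -/

inductive Circ (α : Type) : Type where
  | inp : α → Circ α
  | tru : Circ α
  | fal : Circ α
  | neg : Circ α → Circ α
  | conj : Circ α → Circ α → Circ α
  | disj : Circ α → Circ α → Circ α

def Circ.eval {α : Type} (v : α → Bool) : Circ α → Bool
  | .inp a => v a
  | .tru => true
  | .fal => false
  | .neg c => !(Circ.eval v c)
  | .conj c d => Circ.eval v c && Circ.eval v d
  | .disj c d => Circ.eval v c || Circ.eval v d

def Circ.gates {α : Type} : Circ α → ℕ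
  | .inp _ => 1
  | .tru => 1
  | .fal => 1
  | .neg c => Circ.gates c + 1
  | .conj c d => Circ.gates c + Circ.gates d + 1
  | .disj c d => Circ.gates c + Circ.gates d + 1

noncomputable def outSize [DecidableEq σ] (P : PopComputer σ) : ℕ :=
  sInf {n | ∃ cd cv : Circ σ, Circ.gates cd + Circ.gates cv = n ∧
    ∀ S : Finset σ, S ⊆ P.Q →
      P.O S = if Circ.eval (fun q => decide (q ∈ S)) cd then
          some (Circ.eval (fun q => decide (q ∈ S)) cv) else none}

noncomputable def csize [DecidableEq σ] (P : PopComputer σ) : ℕ :=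
  P.Q.card + Multiset.card P.H + outSize P + ∑ t ∈ P.δ, Multiset.card t.1

noncomputable def asize [DecidableEq σ] (P : PopComputer σ) : ℕ :=
  P.Q.card + Multiset.card P.H + outSize P

/-! Probabilistic execution model. -/

def pairCount [DecidableEq σ] (C r : Multiset σ) : ℕ :=
  (Multiset.powersetCard 2 C).count r

noncomputable def stepKer [DecidableEq σ] (P : PopComputer σ) (C C' : Multiset σ) : ℝ≥0∞ :=
  (∑ t ∈ P.δ, if t.1 ≤ C ∧ C' = C - t.1 + t.2 then (pairCount C t.1 : ℝ≥0∞) else 0) /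
      (Nat.choose (Multiset.card C) 2 : ℝ≥0∞) +
    (if C' = C then
      1 - (∑ t ∈ P.δ, (pairCount C t.1 : ℝ≥0∞)) / (Nat.choose (Multiset.card C) 2 : ℝ≥0∞)
    else 0)

noncomputable def hitKer [DecidableEq σ] (P : PopComputer σ) (A : Set (Multiset σ))
    (C C' : Multiset σ) : ℝ≥0∞ :=
  if C ∈ A then (if C' = C then 1 else 0) else stepKer P C C'

noncomputable def hitIter [DecidableEq σ] (P : PopComputer σ) (A : Set (Multiset σ)) :
    ℕ → Multiset σ → Multiset σ → ℝ≥0∞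
  | 0, C, C' => if C' = C then 1 else 0
  | n + 1, C, C' => ∑' D : Multiset σ, hitIter P A n C D * hitKer P A D C'

/-- Expected hitting time of the set `A`, computed as `∑ₜ Pr[Xₜ ∉ A]` for the chain
absorbed at `A`. -/
noncomputable def expHit [DecidableEq σ] (P : PopComputer σ) (A : Set (Multiset σ))
    (C0 : Multiset σ) : ℝ≥0∞ :=
  ∑' n : ℕ, ∑' C : Multiset σ, if C ∈ A then 0 else hitIter P A n C0 C

def StableConfig [DecidableEq σ] (P : PopComputer σ) (C : Multiset σ) : Prop :=
  ∃ b : Bool, ∀ C', Reaches P C C' → P.O C'.toFinset = some b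

noncomputable def expTermination [DecidableEq σ] (P : PopComputer σ) (C0 : Multiset σ) : ℝ≥0∞ :=
  expHit P {C | Terminal P C} C0

noncomputable def expStabilization [DecidableEq σ] (P : PopComputer σ) (C0 : Multiset σ) : ℝ≥0∞ :=
  expHit P {C | StableConfig P C} C0

/-! Quantifier-free Presburger arithmetic. -/

inductive QFPA (v : ℕ) : Type where
  | threshold (a : Fin v → ℤ) (c : ℤ) : QFPA v
  | remainder (a : Fin v → ℤ) (θ : ℕ) (c : Fin θ) : QFPA v
  | not (φ : QFPA v) : QFPA v
  | and (φ ψ : QFPA v) : QFPA v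
  | or (φ ψ : QFPA v) : QFPA v

def QFPA.eval {v : ℕ} : QFPA v → (Fin v → ℕ) → Bool
  | .threshold a c, x => decide (c ≤ ∑ i, a i * (x i : ℤ))
  | .remainder a θ c, x => decide ((∑ i, a i * (x i : ℤ)) % (θ : ℤ) = ((c : ℕ) : ℤ))
  | .not φ, x => !(QFPA.eval φ x)
  | .and φ ψ, x => QFPA.eval φ x && QFPA.eval ψ x
  | .or φ ψ, x => QFPA.eval φ x || QFPA.eval ψ x

def zsize (z : ℤ) : ℕ := Nat.size z.natAbs + 1

def QFPA.fsize {v : ℕ} : QFPA v → ℕ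
  | .threshold a c => (∑ i, zsize (a i)) + zsize c + 1
  | .remainder a θ c => (∑ i, zsize (a i)) + Nat.size θ + Nat.size (c : ℕ) + 1
  | .not φ => QFPA.fsize φ + 1
  | .and φ ψ => QFPA.fsize φ + QFPA.fsize ψ + 1
  | .or φ ψ => QFPA.fsize φ + QFPA.fsize ψ + 1

def QFPA.double {v : ℕ} : QFPA v → QFPA (v + v)
  | .threshold a c =>
      .threshold (fun i => Fin.addCases (fun j => a j) (fun j => 2 * a j) i) c
  | .remainder a θ c =>
      .remainder (fun i => Fin.addCases (fun j => a j) (fun j => 2 * a j) i) θ c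
  | .not φ => .not (QFPA.double φ)
  | .and φ ψ => .and (QFPA.double φ) (QFPA.double ψ)
  | .or φ ψ => .or (QFPA.double φ) (QFPA.double ψ)

def inputConfig {v : ℕ} (lab : Fin v → σ) (x : Fin v → ℕ) : Multiset σ :=
  ∑ i : Fin v, Multiset.replicate (x i) (lab i)

def DecidesQFPA [DecidableEq σ] {v : ℕ} (P : PopComputer σ) (lab : Fin v → σ)
    (φ : QFPA v) : Prop :=
  Function.Injective lab ∧ P.I = Finset.univ.image lab ∧
    ∀ x : Fin v → ℕ, HasOutput P (inputConfig lab x) (QFPA.eval φ x)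

def DecidesQFPAFrom [DecidableEq σ] {v : ℕ} (P : PopComputer σ) (lab : Fin v → σ)
    (φ : QFPA v) (k : ℕ) : Prop :=
  Function.Injective lab ∧ P.I = Finset.univ.image lab ∧
    ∀ x : Fin v → ℕ, k ≤ ∑ i, x i → HasOutput P (inputConfig lab x) (QFPA.eval φ x)

/-! Potential functions and rapidness. -/

def mweight (w : σ → ℕ) (C : Multiset σ) : ℕ := (C.map w).sum

def IsPotential (P : PopComputer σ) (w : σ → ℕ) : Prop :=
  ∀ t ∈ P.δ, mweight w t.2 + (Multiset.card t.1 - 1) ≤ mweight w t.1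

def tmin [DecidableEq σ] (C r : Multiset σ) : ℕ :=
  if h : r.toFinset.Nonempty then r.toFinset.inf' h (fun q => C.count q) else 0

def speedOn [DecidableEq σ] (T : Finset (Multiset σ × Multiset σ)) (C : Multiset σ) : ℕ :=
  ∑ t ∈ T, (tmin C t.1) ^ 2

def speed [DecidableEq σ] (P : PopComputer σ) (C : Multiset σ) : ℕ := speedOn P.δ C

def RapidAt [DecidableEq σ] (P : PopComputer σ) (w : σ → ℕ) (α : ℝ) (C : Multiset σ) : Prop :=
  ∀ Cterm, Reaches P C Cterm → Terminal P Cterm →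
    ((mweight w C : ℝ) - (mweight w Cterm : ℝ)) ^ 2 / α ≤ (speed P C : ℝ)

def countIn [DecidableEq σ] (P : PopComputer σ) (C : Multiset σ) : ℕ :=
  ∑ q ∈ P.I, C.count q

def WellInitialised [DecidableEq σ] (P : PopComputer σ) (C : Multiset σ) : Prop :=
  ReachableConfig P C ∧ 3 * (countIn P C + Multiset.card P.H) ≤ 2 * Multiset.card C

def outdeg [DecidableEq σ] (P : PopComputer σ) (q : σ) : ℕ :=
  (P.δ.filter (fun t => q ∈ t.1)).card

def IsRapid [DecidableEq σ] (P : PopComputer σ) (α : ℝ) : Prop :=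
  (∃ w : σ → ℕ, IsPotential P w ∧ ∀ C, WellInitialised P C → RapidAt P w α C) ∧
  (∃ q0 : σ, ∀ q ∈ P.Q, q ≠ q0 → outdeg P q ≤ 2) ∧
  (∀ C : Multiset σ, IsInput P C → Terminal P C) ∧
  (∀ t ∈ P.δ, ∀ q ∈ P.I, t.1.count q ≤ 1 ∧ t.2.count q = 0)

def deltaGt [DecidableEq σ] (P : PopComputer σ) (w : σ → ℕ) :
    Finset (Multiset σ × Multiset σ) :=
  P.δ.filter (fun t => mweight w t.2 < mweight w t.1)

def deltaLt [DecidableEq σ] (P : PopComputer σ) (w : σ → ℕ) :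
    Finset (Multiset σ × Multiset σ) :=
  P.δ.filter (fun t => mweight w t.1 < mweight w t.2)

def RapidAtGt [DecidableEq σ] (P : PopComputer σ) (w : σ → ℕ) (α : ℝ) (C : Multiset σ) : Prop :=
  ∀ Cterm, Reaches P C Cterm → Terminal P Cterm →
    ((mweight w C : ℝ) - (mweight w Cterm : ℝ)) ^ 2 / α ≤ (speedOn (deltaGt P w) C : ℝ)

def GroupRapidAt [DecidableEq σ] (P : PopComputer σ) {e : ℕ} (w : Fin e → σ → ℕ) (α : ℝ)
    (C : Multiset σ) : Prop :=
  Terminal P C ∨ ∃ i : Fin e,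
    RapidAtGt P (w i) α C ∧
    (∃ t ∈ deltaGt P (w i), t.1 ≤ C) ∧
    (∀ C', Reaches P C C' → ∀ t ∈ deltaLt P (w i), ¬ t.1 ≤ C')

/-- Refinement between computers over the same state space. -/
def Refines [DecidableEq σ] (P' P : PopComputer σ) (π : Multiset σ → Multiset σ) : Prop :=
  (∀ C D, ReachableConfig P' C → ReachableConfig P' D → Step P' C D →
    Reaches P (π C) (π D)) ∧
  (P.I = P'.I ∧ ∀ CI C, IsInput P' CI → Initial P' CI C →
    ((∃ DI, IsInput P DI ∧ Initial P DI (π C)) ∧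
      ∀ q ∈ P.I, (π C).count q = C.count q)) ∧
  (∀ C, ReachableConfig P' C → Terminal P' C →
    Terminal P (π C) ∧ P.O (π C).toFinset = P'.O C.toFinset)

/-!
Since `P` is bounded, every run from an initial configuration `C₀` reaches a terminal
configuration `C`, and a terminal configuration reaches only itself, so the run stabilises to the
output of `C`. As the predicate depends only on the value `ΣC`, helpers (all in state `0`) do not
change it on `C₀`, and steps preserve it; hence `C` satisfies it iff the input does. Finally `C`
is well-supported, so the output `O(supp C)` is exactly the predicate on the input.
-/

variable {P : PopComputer σ}

theorem Reaches.eq_of_step_invariant {α : Type*} {g : Multiset σ → α}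
    (hg : ∀ C C', Step P C C' → g C = g C') {C C' : Multiset σ} (h : Reaches P C C') :
    g C = g C' := by
  induction h with
  | refl => rfl
  | tail _ hstep ih => exact ih.trans (hg _ _ hstep)

theorem Step.mem_Q {C C' : Multiset σ} (h : Step P C C') (hC : ∀ q ∈ C, q ∈ P.Q) :
    ∀ q ∈ C', q ∈ P.Q := by
  obtain ⟨t, ht, -, rfl⟩ := h
  intro q hq
  rcases Multiset.mem_add.1 hq with hq | hq
  · exact hC q (Multiset.mem_of_le (Multiset.sub_le_self _ _) hq)
  · exact P.delta_mem t ht q (Multiset.mem_add.2 (Or.inr hq))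

theorem Reaches.mem_Q {C C' : Multiset σ} (h : Reaches P C C') (hC : ∀ q ∈ C, q ∈ P.Q) :
    ∀ q ∈ C', q ∈ P.Q := by
  induction h with
  | refl => exact hC
  | tail _ hstep ih => exact hstep.mem_Q ih

theorem Initial.mem_Q {CI C0 : Multiset σ} (hCI : IsInput P CI) (h : Initial P CI C0) :
    ∀ q ∈ C0, q ∈ P.Q := by
  obtain ⟨CH, hCH, -, rfl⟩ := h
  intro q hq
  rcases Multiset.mem_add.1 hq with hq | hq
  · exact P.I_sub (hCI q hq)
  · exact (P.H_mem q (hCH q hq)).1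

theorem ReachableConfig.toFinset_subset [DecidableEq σ] {C : Multiset σ}
    (h : ReachableConfig P C) : C.toFinset ⊆ P.Q := by
  obtain ⟨CI, C0, hCI, hC0, hreach⟩ := h
  intro q hq
  exact hreach.mem_Q (hC0.mem_Q hCI) q (Multiset.mem_toFinset.1 hq)

theorem Terminal.eq_of_reaches {C C' : Multiset σ} (hC : Terminal P C) (h : Reaches P C C') :
    C' = C := by
  induction h with
  | refl => rfl
  | tail _ hstep ih =>
    obtain ⟨t, ht, hle, -⟩ := hstep
    exact absurd (ih ▸ hle) (hC t ht)

theorem IsRun.reaches {f : ℕ → Multiset σ} (hf : IsRun P f) (i : ℕ) : Reaches P (f 0) (f i) := by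
  induction i with
  | zero => exact .refl
  | succ n ih =>
    rcases hf n with hstep | ⟨-, heq⟩
    · exact ih.tail hstep
    · exact heq ▸ ih

theorem IsRun.exists_terminal {f : ℕ → Multiset σ} (hf : IsRun P f) (hP : Bounded P)
    (h0 : ∃ CI, IsInput P CI ∧ Initial P CI (f 0)) : ∃ i, Terminal P (f i) := by
  by_contra! hnot
  exact hP ⟨f, h0, fun i => (hf i).resolve_right fun h => hnot i h.1⟩

theorem hasOutput_of_bounded [DecidableEq σ] {CI : Multiset σ} {b : Bool} (hP : Bounded P)
    (hCI : IsInput P CI)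
    (hout : ∀ C0, Initial P CI C0 → ∀ C, Reaches P C0 C → Terminal P C →
      P.O C.toFinset = some b) :
    HasOutput P CI b := by
  intro C0 f hC0 hfair hf0
  subst hf0
  obtain ⟨i, hi⟩ := hfair.1.exists_terminal hP ⟨CI, hCI, hC0⟩
  refine ⟨i, fun C hC => ?_⟩
  rw [hi.eq_of_reaches hC]
  exact hout _ hC0 _ (hfair.1.reaches i) hi

theorem Initial.sum_eq [AddCommMonoid σ] (hH : ∀ q ∈ P.H, q = 0) {CI C0 : Multiset σ}
    (h : Initial P CI C0) : C0.sum = CI.sum := by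
  obtain ⟨CH, hCH, -, rfl⟩ := h
  rw [Multiset.sum_add, Multiset.sum_eq_zero fun q hq => hH q (hCH q hq), add_zero]

theorem inputConfig_isInput {v : ℕ} {a : Fin v → σ} (ha : ∀ i, a i ∈ P.I) (x : Fin v → ℕ) :
    IsInput P (inputConfig a x) := by
  intro q hq
  obtain ⟨i, -, hi⟩ := Multiset.mem_sum.1 hq
  exact Multiset.eq_of_mem_replicate hi ▸ ha i

theorem stmt4_general (v : ℕ) (a : Fin v → ℤ) (sat : Multiset ℤ → Bool)
    (hsat : (∃ c : ℤ, ∀ C : Multiset ℤ, sat C = decide (c ≤ C.sum)) ∨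
            (∃ (θ : ℕ) (c : ℤ), 1 ≤ θ ∧ 0 ≤ c ∧ c < θ ∧
              ∀ C : Multiset ℤ, sat C = decide (C.sum % (θ : ℤ) = c)))
    (P : PopComputer ℤ)
    (hI : P.I = Finset.univ.image a)
    (hH : ∀ q ∈ P.H, q = (0 : ℤ))
    (h1 : Bounded P)
    (h2 : ∀ C C' : Multiset ℤ, Step P C C' → sat C = sat C')
    (h3 : ∀ C : Multiset ℤ, ReachableConfig P C → Terminal P C →
      sat C = sat C.toFinset.val)
    (h4 : ∀ S : Finset ℤ, S ⊆ P.Q → P.O S = some (sat S.val)) :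
    ∀ x : Fin v → ℕ, HasOutput P (inputConfig a x) (sat (inputConfig a x)) := by
  have sat_eq_of_sum_eq : ∀ C D : Multiset ℤ, C.sum = D.sum → sat C = sat D := by
    rintro C D h
    rcases hsat with ⟨c, hc⟩ | ⟨θ, c, -, -, -, hc⟩ <;> rw [hc, hc, h]
  intro x
  have hin : IsInput P (inputConfig a x) :=
    inputConfig_isInput (fun i => hI ▸ Finset.mem_image_of_mem a (Finset.mem_univ i)) x
  refine hasOutput_of_bounded h1 hin fun C0 hC0 C hreach hterm => ?_
  have hC : ReachableConfig P C := ⟨_, C0, hin, hC0, hreach⟩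
  rw [h4 _ hC.toFinset_subset, ← h3 C hC hterm, ← hreach.eq_of_step_invariant h2,
    sat_eq_of_sum_eq _ _ (hC0.sum_eq hH)]

/-- Proposition 6.3: the generic correctness method. -/
theorem stmt4 (v : ℕ) (a : Fin v → ℤ) (sat : Multiset ℤ → Bool)
    (hsat : (∃ c : ℤ, ∀ C : Multiset ℤ, sat C = decide (c ≤ C.sum)) ∨
            (∃ (θ : ℕ) (c : ℤ), 1 ≤ θ ∧ 0 ≤ c ∧ c < θ ∧
              ∀ C : Multiset ℤ, sat C = decide (C.sum % (θ : ℤ) = c)))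
    (P : PopComputer ℤ)
    (hQ0 : (0 : ℤ) ∈ P.Q) (hQa : ∀ i, a i ∈ P.Q)
    (hI : P.I = Finset.univ.image a)
    (hH : ∀ q ∈ P.H, q = (0 : ℤ))
    (h1 : Bounded P)
    (h2 : ∀ C C' : Multiset ℤ, Step P C C' → sat C = sat C')
    (h3 : ∀ C : Multiset ℤ, ReachableConfig P C → Terminal P C →
      sat C = sat C.toFinset.val)
    (h4 : ∀ S : Finset ℤ, S ⊆ P.Q → P.O S = some (sat S.val)) :
    ∀ x : Fin v → ℕ, HasOutput P (inputConfig a x) (sat (inputConfig a x)) :=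
  stmt4_general v a sat hsat P hI hH h1 h2 h3 h4

end PaperPP
end

section
/- (Lemma 6.7, well-supported configurations for threshold predicates) Let c ≥ 0 and d ≥ 1 be integers with 2^{d−1} ≥ c. Let C be a multiset over the set of integers {0} ∪ {2^i, −2^i : 0 ≤ i ≤ d} satisfying: (1) C(2^i) ≤ 1 and C(−2^i) ≤ 1 for every 0 ≤ i ≤ d−1; (2) C(2^i) = 0 or C(−2^i) = 0 for every 0 ≤ i ≤ d; (3) C(2^d) = 0 or C(−2^{d−1}) = 0, and C(−2^d) = 0 or C(2^{d−1}) = 0. Then ΣC ≥ c if and only if Σ supp(C) ≥ c, where ΣC = Σ_q q·C(q) is the value of C and supp(C) is the multiset containing each element of C exactly once. -/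
open scoped ENNReal Classical

namespace PaperPP

variable {σ : Type}

/-- Lemma 6.7: well-supported configurations for threshold predicates. -/
theorem stmt6 (d : ℕ) (hd : 1 ≤ d) (c : ℤ) (hc0 : 0 ≤ c) (hcd : c ≤ 2 ^ (d - 1))
    (C : Multiset ℤ)
    (hsupp : ∀ q ∈ C, q = 0 ∨ ∃ i ≤ d, q = 2 ^ i ∨ q = -(2 ^ i))
    (h1 : ∀ i < d, C.count ((2 : ℤ) ^ i) ≤ 1 ∧ C.count (-((2 : ℤ) ^ i)) ≤ 1)
    (h2 : ∀ i ≤ d, C.count ((2 : ℤ) ^ i) = 0 ∨ C.count (-((2 : ℤ) ^ i)) = 0)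
    (h3a : C.count ((2 : ℤ) ^ d) = 0 ∨ C.count (-((2 : ℤ) ^ (d - 1))) = 0)
    (h3b : C.count (-((2 : ℤ) ^ d)) = 0 ∨ C.count ((2 : ℤ) ^ (d - 1)) = 0) :
    c ≤ C.sum ↔ c ≤ ∑ q ∈ C.toFinset, q := by
  classical
  set S := C.toFinset with hS
  have hpos : ∀ q ∈ S, 1 ≤ C.count q := by
    intro q hq
    exact Multiset.one_le_count_iff_mem.2 (Multiset.mem_toFinset.1 hq)
  have hmemS : ∀ q, q ∈ S ↔ q ∈ C := fun q => Multiset.mem_toFinset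
  have key : C.sum = (∑ q ∈ S, q) + ∑ q ∈ S, ((C.count q : ℤ) - 1) * q := by
    rw [Finset.sum_multiset_count, ← Finset.sum_add_distrib]
    refine Finset.sum_congr rfl fun q hq => ?_
    rw [nsmul_eq_mul]; ring
  have geom : ∀ n : ℕ, ∑ i ∈ Finset.range n, (2:ℤ)^i = 2^n - 1 := by
    intro n; induction n with
    | zero => simp
    | succ n ih => rw [Finset.sum_range_succ, ih]; ring
  have hpowinj : Function.Injective (fun i : ℕ => (2:ℤ)^i) :=
    pow_right_injective₀ (by norm_num) (by norm_num)
  have h2d : (2:ℤ)^d = 2 * 2^(d-1) := by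
    conv_lhs => rw [show d = (d-1)+1 by omega]
    ring
  set M := S.filter (fun q => q < 0) with hM
  set P := S.filter (fun q => ¬ q < 0) with hP
  have hsplit : (∑ q ∈ S, q) = (∑ q ∈ M, q) + (∑ q ∈ P, q) :=
    (Finset.sum_filter_add_sum_filter_not S _ _).symm
  by_cases hp : 2 ≤ C.count ((2:ℤ)^d)
  · -- both sides true
    have hnd : C.count (-((2:ℤ)^d)) = 0 := (h2 d le_rfl).resolve_left (by omega)
    have h3a' : C.count (-((2:ℤ)^(d-1))) = 0 := h3a.resolve_left (by omega)
    have hneg1 : ∀ q ∈ S, q < 0 → C.count q = 1 := by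
      intro q hq hq0
      rcases hsupp q ((hmemS q).1 hq) with rfl | ⟨i, hid, rfl | rfl⟩
      · omega
      · exact absurd hq0 (not_lt.2 (by positivity))
      · rcases eq_or_lt_of_le hid with rfl | hlt
        · have := hpos _ hq; omega
        · have := (h1 i hlt).2; have := hpos _ hq; omega
    have hMneg : ∑ q ∈ M, (-q) ≤ 2^(d-1) - 1 := by
      have himg : M.image (fun q => -q) ⊆ (Finset.range (d-1)).image (fun i => (2:ℤ)^i) := by
        intro x hx
        obtain ⟨q, hq, rfl⟩ := Finset.mem_image.1 hx
        obtain ⟨hqS, hq0⟩ := Finset.mem_filter.1 hq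
        rcases hsupp q ((hmemS q).1 hqS) with rfl | ⟨i, hid, rfl | rfl⟩
        · omega
        · exact absurd hq0 (not_lt.2 (by positivity))
        · have hiN : i ≠ d := by
            rintro rfl; have := hpos _ hqS; omega
          have hiN' : i ≠ d - 1 := by
            rintro rfl; have := hpos _ hqS; omega
          exact Finset.mem_image.2 ⟨i, Finset.mem_range.2 (by omega), by ring⟩
      calc ∑ q ∈ M, (-q) = ∑ x ∈ M.image (fun q => -q), x := by
            rw [Finset.sum_image (fun a _ b _ h => neg_injective h)]
        _ ≤ ∑ x ∈ (Finset.range (d-1)).image (fun i => (2:ℤ)^i), x := by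
            refine Finset.sum_le_sum_of_subset_of_nonneg himg ?_
            intro x hx _
            obtain ⟨i, _, rfl⟩ := Finset.mem_image.1 hx
            positivity
        _ = 2^(d-1) - 1 := by
            rw [Finset.sum_image (fun a _ b _ h => hpowinj h), geom]
    have hMsum : -(2^(d-1) - 1) ≤ ∑ q ∈ M, q := by
      have hns : ∑ q ∈ M, (-q) = -∑ q ∈ M, q := by rw [Finset.sum_neg_distrib]
      linarith [hMneg]
    have hPsum : (2:ℤ)^d ≤ ∑ q ∈ P, q := by
      have hmem2d : (2:ℤ)^d ∈ P := by
        refine Finset.mem_filter.2 ⟨(hmemS _).2 ?_, not_lt.2 (by positivity)⟩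
        exact Multiset.count_pos.1 (by omega)
      calc (2:ℤ)^d = ∑ q ∈ ({(2:ℤ)^d} : Finset ℤ), q := by simp
        _ ≤ ∑ q ∈ P, q := by
            refine Finset.sum_le_sum_of_subset_of_nonneg (Finset.singleton_subset_iff.2 hmem2d) ?_
            intro x hx _
            have := (Finset.mem_filter.1 hx).2; omega
    have hN : 2^(d-1) + 1 ≤ ∑ q ∈ S, q := by
      rw [hsplit]; linarith [h2d]
    have hdiff : 0 ≤ ∑ q ∈ S, ((C.count q : ℤ) - 1) * q := by
      refine Finset.sum_nonneg fun q hq => ?_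
      rcases lt_trichotomy q 0 with h | h | h
      · rw [hneg1 q hq h]; simp
      · simp [h]
      · have h1' : (1:ℤ) ≤ (C.count q : ℤ) := by exact_mod_cast hpos q hq
        nlinarith
    constructor <;> intro <;> [linarith; linarith [key]]
  · by_cases hn : 2 ≤ C.count (-((2:ℤ)^d))
    · -- both sides false
      have hpd : C.count ((2:ℤ)^d) = 0 := (h2 d le_rfl).resolve_right (by omega)
      have h3b' : C.count ((2:ℤ)^(d-1)) = 0 := h3b.resolve_left (by omega)
      have hpos1 : ∀ q ∈ S, 0 < q → C.count q = 1 := by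
        intro q hq hq0
        rcases hsupp q ((hmemS q).1 hq) with rfl | ⟨i, hid, rfl | rfl⟩
        · omega
        · rcases eq_or_lt_of_le hid with rfl | hlt
          · have := hpos _ hq; omega
          · have := (h1 i hlt).1; have := hpos _ hq; omega
        · have h0 : (0:ℤ) < 2^i := by positivity
          omega
      have hPsum : ∑ q ∈ P, q ≤ 2^(d-1) - 1 := by
        have himg : P ⊆ insert 0 ((Finset.range (d-1)).image (fun i => (2:ℤ)^i)) := by
          intro q hq
          obtain ⟨hqS, hq0⟩ := Finset.mem_filter.1 hq
          rcases hsupp q ((hmemS q).1 hqS) with rfl | ⟨i, hid, rfl | rfl⟩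
          · exact Finset.mem_insert_self _ _
          · have hiN : i ≠ d := by
              rintro rfl; have := hpos _ hqS; omega
            have hiN' : i ≠ d - 1 := by
              rintro rfl; have := hpos _ hqS; omega
            exact Finset.mem_insert_of_mem
              (Finset.mem_image.2 ⟨i, Finset.mem_range.2 (by omega), rfl⟩)
          · have h0 : (0:ℤ) < 2^i := by positivity
            omega
        calc ∑ q ∈ P, q ≤ ∑ q ∈ insert 0 ((Finset.range (d-1)).image (fun i => (2:ℤ)^i)), q := by
              refine Finset.sum_le_sum_of_subset_of_nonneg himg ?_
              intro x hx _
              rcases Finset.mem_insert.1 hx with rfl | hx'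
              · exact le_refl 0
              · obtain ⟨i, _, rfl⟩ := Finset.mem_image.1 hx'; positivity
          _ = 2^(d-1) - 1 := by
              rw [Finset.sum_insert (by
                intro h
                obtain ⟨i, _, hi⟩ := Finset.mem_image.1 h
                have h0 : (0:ℤ) < 2^i := by positivity
                omega),
                Finset.sum_image (fun a _ b _ h => hpowinj h), geom]
              ring
      have hMsum : ∑ q ∈ M, q ≤ -(2^d) := by
        have hmem2d : -((2:ℤ)^d) ∈ M := by
          refine Finset.mem_filter.2 ⟨(hmemS _).2 ?_, by
            have h0 : (0:ℤ) < 2^d := by positivity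
            omega⟩
          exact Multiset.count_pos.1 (by omega)
        have hle : ∑ q ∈ ({-((2:ℤ)^d)} : Finset ℤ), (-q) ≤ ∑ q ∈ M, (-q) := by
          refine Finset.sum_le_sum_of_subset_of_nonneg (Finset.singleton_subset_iff.2 hmem2d) ?_
          intro x hx _
          have := (Finset.mem_filter.1 hx).2; omega
        have hns : ∑ q ∈ M, (-q) = -∑ q ∈ M, q := by rw [Finset.sum_neg_distrib]
        simp only [Finset.sum_singleton, neg_neg] at hle
        linarith
      have hN : ∑ q ∈ S, q ≤ -(2^(d-1)) - 1 := by
        rw [hsplit]; linarith [h2d]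
      have hdiff : ∑ q ∈ S, ((C.count q : ℤ) - 1) * q ≤ 0 := by
        refine Finset.sum_nonpos fun q hq => ?_
        rcases lt_trichotomy q 0 with h | h | h
        · have h1' : (1:ℤ) ≤ (C.count q : ℤ) := by exact_mod_cast hpos q hq
          nlinarith
        · simp [h]
        · rw [hpos1 q hq h]; simp
      have h0d : (0:ℤ) < 2^(d-1) := by positivity
      constructor <;> intro <;> linarith [key]
    · -- counts all ≤ 1 : equal sums
      have heq1 : ∀ q ∈ S, q ≠ 0 → C.count q = 1 := by
        intro q hq hq0
        rcases hsupp q ((hmemS q).1 hq) with rfl | ⟨i, hid, rfl | rfl⟩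
        · omega
        · rcases eq_or_lt_of_le hid with rfl | hlt
          · have := hpos _ hq; omega
          · have := (h1 i hlt).1; have := hpos _ hq; omega
        · rcases eq_or_lt_of_le hid with rfl | hlt
          · have := hpos _ hq; omega
          · have := (h1 i hlt).2; have := hpos _ hq; omega
      have hdiff : ∑ q ∈ S, ((C.count q : ℤ) - 1) * q = 0 := by
        refine Finset.sum_eq_zero fun q hq => ?_
        by_cases h : q = 0
        · simp [h]
        · rw [heq1 q hq h]; simp
      rw [key, hdiff, add_zero]


end PaperPP
end

section
/- (Lemma 6.2, boundedness is equivalent to existence of a small potential function) There is a constant c > 0 such that the following holds. Let P = (Q,δ,I,O,H) be a population computer of size m ≥ 2 such that for every state q ∈ Q some configuration reachable from some initial configuration puts at least one agent in q. Then P is bounded if and only if there exists a potential function Φ for P, with weights w : Q → ℕ, whose maximum weight max_{q∈Q} w(q) is at most 2^{c·m·log₂ m}. -/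
open scoped ENNReal Classical

/-!
Boundedness is equivalent to the absence of a nonzero `y ∈ ℕ^δ` whose transitions, fired `y t`
times each, consume no more agents from any state than they produce: such a `y` can be pumped
forever from a reachable configuration that covers its consumption (every state can be populated),
and a potential function strictly decreases along every run. By Ville's theorem of the alternative,
proved by Fourier–Motzkin elimination, the absence of such a `y` (over `ℚ`, after clearing
denominators) yields a rational `w ≥ 0` with `(r - s) · w ≥ 1` for every transition `r ↦ s`.
Moving `w` to a vertex of this polyhedron and applying Cramer's rule gives an integral solution
whose entries are bounded by `n! m^n`, with `n = |Q|` and `m` the size of `P`. Scaled by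
`m - 1 ≥ |r| - 1`, it is a potential function with weights at most `2^(6 m log₂ m)`.
-/

open Matrix

section FourierMotzkin
variable {K : Type*} [CommRing K] [LinearOrder K] {ι : Type*} [DecidableEq ι]

/-- Fourier–Motzkin elimination of the variable with coefficients `a`, as the matrix of the row
combinations that cancel it. -/
def fmCombination (a : ι → K) :
    Matrix ({i // a i ≤ 0} ⊕ {p : ι × ι // 0 < a p.1 ∧ a p.2 < 0}) ι K :=
  Matrix.of <| Sum.elim (fun i => Pi.single i.1 1)
    (fun p => (-a p.1.2) • Pi.single p.1.1 1 + a p.1.1 • Pi.single p.1.2 1)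

variable (a : ι → K)

lemma fmCombination_nonneg [IsStrictOrderedRing K] (p) (i : ι) : 0 ≤ fmCombination a p i := by
  rcases p with ⟨i', -⟩ | ⟨⟨i', j'⟩, hi, hj⟩
  · simp only [fmCombination, of_apply, Sum.elim_inl, Pi.single_apply]
    split_ifs <;> norm_num
  · simp only [fmCombination, of_apply, Sum.elim_inr, Pi.add_apply, Pi.smul_apply, smul_eq_mul,
      Pi.single_apply]
    split_ifs <;> nlinarith

lemma exists_fmCombination_pos [IsStrictOrderedRing K] (p) : ∃ i, 0 < fmCombination a p i := by
  rcases p with ⟨i, -⟩ | ⟨⟨i, j⟩, hi, hj⟩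
  · exact ⟨i, by simp [fmCombination]⟩
  · have hij : i ≠ j := by rintro rfl; linarith
    exact ⟨i, by simp [fmCombination, hij, hj]⟩

lemma fmCombination_mulVec_inl [Fintype ι] (v : ι → K) (i) :
    (fmCombination a *ᵥ v) (.inl i) = v i := by
  simp [fmCombination, mulVec, dotProduct, Pi.single_apply]

lemma fmCombination_mulVec_inr [Fintype ι] (v : ι → K) (p) :
    (fmCombination a *ᵥ v) (.inr p) = -a p.1.2 * v p.1.1 + a p.1.1 * v p.1.2 := by
  simp [fmCombination, mulVec, dotProduct, Pi.single_apply, add_mul, Finset.sum_add_distrib]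

lemma fmCombination_mulVec_self_nonpos [IsStrictOrderedRing K] [Fintype ι] (p) :
    (fmCombination a *ᵥ a) p ≤ 0 := by
  rcases p with ⟨i, hi⟩ | p
  · simpa [fmCombination_mulVec_inl] using hi
  · rw [fmCombination_mulVec_inr]; linarith [mul_comm (a p.1.1) (a p.1.2)]

end FourierMotzkin

section Ville
variable {K : Type*} [Field K] [LinearOrder K] [IsStrictOrderedRing K] {ι : Type*} [Fintype ι]

open Finset in
/-- The pair rows of the eliminated system say that every lower bound `(c i - S i) / a i` on `x`
(for `a i > 0`) lies below every upper bound `(S j - c j) / -a j` (for `a j < 0`). -/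
lemma exists_nonneg_forall_le_add_mul [DecidableEq ι] (a c S : ι → K)
    (h : fmCombination a *ᵥ c ≤ fmCombination a *ᵥ S) : ∃ x, 0 ≤ x ∧ ∀ i, c i ≤ S i + a i * x := by
  have hrow : ∀ i, a i ≤ 0 → c i ≤ S i := fun i hi => by
    simpa only [fmCombination_mulVec_inl] using h (.inl ⟨i, hi⟩)
  have hpair : ∀ i j, 0 < a i → a j < 0 → -a j * c i + a i * c j ≤ -a j * S i + a i * S j :=
    fun i j hi hj => by simpa only [fmCombination_mulVec_inr] using h (.inr ⟨(i, j), hi, hj⟩)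
  set x := (insert 0 ((univ.filter fun j => 0 < a j).image fun i => (c i - S i) / a i)).max'
    (insert_nonempty _ _) with hx
  refine ⟨x, le_max' _ _ (mem_insert_self _ _), fun i => ?_⟩
  rcases lt_trichotomy (a i) 0 with hneg | hzero | hpos
  · suffices x ≤ (S i - c i) / -a i by
      rw [le_div_iff₀ (neg_pos.2 hneg)] at this
      linarith
    rw [hx]
    refine max'_le _ _ _ fun y hy => ?_
    rcases mem_insert.1 hy with rfl | hy
    · exact div_nonneg (sub_nonneg.2 (hrow i hneg.le)) (neg_nonneg.2 hneg.le)
    obtain ⟨k, hk, rfl⟩ := mem_image.1 hy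
    have hk : 0 < a k := (mem_filter.1 hk).2
    rw [div_le_div_iff₀ hk (neg_pos.2 hneg)]
    linarith [hpair k i hk hneg]
  · simpa [hzero] using hrow i hzero.le
  · have : (c i - S i) / a i ≤ x := by
      rw [hx]
      apply le_max'
      exact mem_insert_of_mem (mem_image_of_mem _ (mem_filter.2 ⟨mem_univ _, hpos⟩))
    rw [div_le_iff₀ hpos] at this
    linarith

/-- `y' ᵥ* fmCombination a` is a nonnegative dependency among the rows of `A`: the combined rows
have last entry `≤ 0`, and every row of `fmCombination a` has a positive entry. -/
lemma eq_zero_of_vecMul_fmCombination_mul_nonpos [DecidableEq ι] {n : ℕ}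
    {A : Matrix ι (Fin (n + 1)) K} (hA : ∀ y : ι → K, 0 ≤ y → y ᵥ* A ≤ 0 → y = 0) {y' : _ → K}
    (hy' : 0 ≤ y')
    (hyA : y' ᵥ* (fmCombination (fun i => A i (Fin.last n)) * A.submatrix id Fin.castSucc) ≤ 0) :
    y' = 0 := by
  set G := fmCombination fun i => A i (Fin.last n)
  have hG := fmCombination_nonneg fun i => A i (Fin.last n)
  have hy : 0 ≤ y' ᵥ* G := fun i => Finset.sum_nonneg fun p _ => mul_nonneg (hy' p) (hG p i)
  have hy0 : y' ᵥ* G = 0 := hA _ hy fun q => by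
    rw [vecMul_vecMul]
    induction q using Fin.lastCases with
    | last => exact Finset.sum_nonpos fun p _ =>
        mul_nonpos_of_nonneg_of_nonpos (hy' p) (fmCombination_mulVec_self_nonpos _ p)
    | cast q => exact hyA q
  funext p
  obtain ⟨i, hi⟩ := exists_fmCombination_pos (fun i => A i (Fin.last n)) p
  have hle : y' p * G p i ≤ (y' ᵥ* G) i :=
    Finset.single_le_sum (f := fun p => y' p * G p i) (fun p _ => mul_nonneg (hy' p) (hG p i))
      (Finset.mem_univ p)
  rw [hy0] at hle
  exact le_antisymm (nonpos_of_mul_nonpos_left hle hi) (hy' p)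

theorem exists_nonneg_le_mulVec_fin {n : ℕ} (A : Matrix ι (Fin n) K)
    (hA : ∀ y : ι → K, 0 ≤ y → y ᵥ* A ≤ 0 → y = 0) (c : ι → K) :
    ∃ w, 0 ≤ w ∧ c ≤ A *ᵥ w := by
  induction n generalizing ι with
  | zero =>
    refine ⟨0, le_rfl, fun i => ?_⟩
    have := congr_fun (hA (Pi.single i 1) (Pi.single_nonneg.2 zero_le_one) fun q => q.elim0) i
    simp at this
  | succ n ih =>
    set a : ι → K := fun i => A i (Fin.last n)
    set A₀ := A.submatrix id Fin.castSucc
    obtain ⟨w, hw, hcw⟩ := ih (fmCombination a * A₀)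
      (fun _ hy' hyA => eq_zero_of_vecMul_fmCombination_mul_nonpos hA hy' hyA)
      (fmCombination a *ᵥ c)
    rw [← mulVec_mulVec] at hcw
    obtain ⟨x, hx, hcx⟩ := exists_nonneg_forall_le_add_mul a c (A₀ *ᵥ w) hcw
    refine ⟨Fin.snoc w x, fun q => ?_, fun i => ?_⟩
    · induction q using Fin.lastCases with
      | last => simpa using hx
      | cast q => simpa using hw q
    convert hcx i using 1
    simp [A₀, a, mulVec, dotProduct, Fin.sum_univ_castSucc]

theorem exists_nonneg_le_mulVec {κ : Type*} [Fintype κ] (A : Matrix ι κ K)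
    (hA : ∀ y : ι → K, 0 ≤ y → y ᵥ* A ≤ 0 → y = 0) (c : ι → K) :
    ∃ w, 0 ≤ w ∧ c ≤ A *ᵥ w := by
  let e := Fintype.equivFin κ
  obtain ⟨w, hw, hcw⟩ := exists_nonneg_le_mulVec_fin (A.submatrix id e.symm)
    (fun y hy hyA => hA y hy fun q => by simpa [vecMul, dotProduct] using hyA (e q)) c
  refine ⟨w ∘ e, fun q => hw (e q), fun i => ?_⟩
  simpa [submatrix_mulVec_equiv] using hcw i

end Ville

section Vertex
open Finset
variable {K : Type*} [Field K] [LinearOrder K] {J κ : Type*} [Fintype J] [Fintype κ]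
  (B : Matrix J κ K) (γ : J → K)

def tightRows (w : κ → K) : Finset J := univ.filter fun j => (B *ᵥ w) j = γ j

variable {B γ}

lemma exists_tightRows_det_ne_zero [DecidableEq κ] {w : κ → K}
    (hspan : Submodule.span K (Set.range fun j : tightRows B γ w => B j) = ⊤) :
    ∃ f : κ → J, (∀ p, f p ∈ tightRows B γ w) ∧ (B.submatrix f id).det ≠ 0 := by
  obtain ⟨ι', a, -, hsp, hli⟩ := exists_linearIndependent' K fun j : tightRows B γ w => B j
  let e := (Module.Basis.mk hli (by rw [hsp, hspan])).indexEquiv (Pi.basisFun K κ)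
  refine ⟨fun p => a (e.symm p), fun p => (a _).2, ?_⟩
  have : LinearIndependent K (B.submatrix (fun p => (a (e.symm p)).1) id).row :=
    hli.comp e.symm e.symm.injective
  exact ((isUnit_iff_isUnit_det _).1 (linearIndependent_rows_iff_isUnit.1 this)).ne_zero

variable [IsStrictOrderedRing K]

/-- Move along `d` until the first row with `(B *ᵥ d) j < 0` becomes tight. -/
lemma exists_le_mulVec_tightRows_ssubset {w d : κ → K} (hw : γ ≤ B *ᵥ w)
    (hd : ∀ j ∈ tightRows B γ w, (B *ᵥ d) j = 0) (hneg : ∃ j, (B *ᵥ d) j < 0) :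
    ∃ w', γ ≤ B *ᵥ w' ∧ tightRows B γ w ⊂ tightRows B γ w' := by
  obtain ⟨j₀, hj₀, hmin⟩ := (univ.filter fun j => (B *ᵥ d) j < 0).exists_min_image
    (fun j => ((B *ᵥ w) j - γ j) / -(B *ᵥ d) j) (by simpa [Finset.Nonempty] using hneg)
  have hj₀ : (B *ᵥ d) j₀ < 0 := (mem_filter.1 hj₀).2
  set m := ((B *ᵥ w) j₀ - γ j₀) / -(B *ᵥ d) j₀
  have hm : 0 ≤ m := div_nonneg (sub_nonneg.2 (hw j₀)) (neg_nonneg.2 hj₀.le)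
  have hBw' : ∀ j, (B *ᵥ (w + m • d)) j = (B *ᵥ w) j + m * (B *ᵥ d) j := by
    simp [mulVec_add, mulVec_smul]
  refine ⟨w + m • d, fun j => ?_, ?_⟩
  · rw [hBw']
    rcases le_or_gt 0 ((B *ᵥ d) j) with hj | hj
    · nlinarith [hw j]
    · have := hmin j (mem_filter.2 ⟨mem_univ j, hj⟩)
      rw [le_div_iff₀ (neg_pos.2 hj)] at this
      nlinarith
  refine ssubset_iff_of_subset (fun j hj => ?_) |>.2 ⟨j₀, ?_, ?_⟩
  · simp only [tightRows, mem_filter, mem_univ, true_and] at hj ⊢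
    rw [hBw', hd j (by simpa [tightRows] using hj), mul_zero, add_zero, hj]
  · simp only [tightRows, mem_filter, mem_univ, true_and]
    rw [hBw', show m * (B *ᵥ d) j₀ = -((B *ᵥ w) j₀ - γ j₀) by
      simp only [m]; field_simp [hj₀.ne]]
    ring
  · intro h
    exact hj₀.ne (hd j₀ h)

lemma exists_le_mulVec_span_tightRows_eq_top (hB : ∀ d, B *ᵥ d = 0 → d = 0) {w : κ → K}
    (hw : γ ≤ B *ᵥ w) : ∃ w', γ ≤ B *ᵥ w' ∧
      Submodule.span K (Set.range fun j : tightRows B γ w' => B j) = ⊤ := by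
  induction hk : (tightRows B γ w)ᶜ.card using Nat.strong_induction_on generalizing w with
  | _ k ih =>
  by_cases htop : Submodule.span K (Set.range fun j : tightRows B γ w => B j) = ⊤
  · exact ⟨w, hw, htop⟩
  obtain ⟨f, hf, hfspan⟩ := Submodule.exists_dual_map_eq_bot_of_lt_top (lt_top_iff_ne_top.2 htop)
    inferInstance
  set d : κ → K := fun q => f fun q' => if q = q' then 1 else 0
  have hfd : ∀ v, f v = v ⬝ᵥ d := fun v => by
    rw [LinearMap.pi_apply_eq_sum_univ f v]; rfl
  have hd : ∀ j ∈ tightRows B γ w, (B *ᵥ d) j = 0 := fun j hj => by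
    have : f (B j) ∈ (Submodule.span K (Set.range fun j : tightRows B γ w => B j)).map f :=
      Submodule.mem_map_of_mem (Submodule.subset_span ⟨⟨j, hj⟩, rfl⟩)
    rw [hfspan, Submodule.mem_bot, hfd] at this
    exact this
  have hBd : B *ᵥ d ≠ 0 := fun h => hf <| LinearMap.ext fun v => by
    rw [hfd, hB d h, dotProduct_zero, LinearMap.zero_apply]
  obtain ⟨j, hj⟩ := Function.ne_iff.1 hBd
  have step : ∀ d', (∀ j ∈ tightRows B γ w, (B *ᵥ d') j = 0) → (∃ j, (B *ᵥ d') j < 0) →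
      ∃ w', γ ≤ B *ᵥ w' ∧
        Submodule.span K (Set.range fun j : tightRows B γ w' => B j) = ⊤ := fun d' hd' hneg => by
    obtain ⟨w', hw', hsub⟩ := exists_le_mulVec_tightRows_ssubset hw hd' hneg
    exact ih _ (hk ▸ card_lt_card (compl_ssubset_compl.2 hsub)) hw' rfl
  rcases lt_or_gt_of_ne hj with hlt | hgt
  · exact step d hd ⟨j, hlt⟩
  · refine step (-d) (fun j hj => by simp [mulVec_neg, hd j hj]) ⟨j, ?_⟩
    simpa [mulVec_neg] using hgt

end Vertex

section IntegerVertex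
variable {κ : Type*} [Fintype κ]

lemma Matrix.cramer_mulVec [DecidableEq κ] {R : Type*} [CommRing R] (A : Matrix κ κ R)
    (w : κ → R) : A.cramer (A *ᵥ w) = A.det • w := by
  rw [cramer_eq_adjugate_mulVec, mulVec_mulVec, adjugate_mul, smul_mulVec, one_mulVec]

lemma abs_cramer_le [DecidableEq κ] {A : Matrix κ κ ℤ} {b : κ → ℤ} {M : ℤ}
    (hA : ∀ i j, |A i j| ≤ M) (hb : ∀ i, |b i| ≤ M) (q : κ) :
    |A.cramer b q| ≤ (Fintype.card κ).factorial * M ^ Fintype.card κ := by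
  rw [cramer_apply, ← nsmul_eq_mul]
  refine det_le (abv := AbsoluteValue.abs) fun i j => ?_
  rw [updateCol_apply]
  split_ifs
  exacts [hb i, hA i j]

lemma intCast_cramer [DecidableEq κ] {K : Type*} [CommRing K] (A : Matrix κ κ ℤ) (b : κ → ℤ)
    (q : κ) : ((A.cramer b q : ℤ) : K) = (A.map (↑)).cramer (fun i => (b i : K)) q := by
  rw [cramer_apply, cramer_apply, Int.cast_det, map_updateCol]
  rfl

/-- A vertex of the feasible region, scaled by the absolute value of the determinant of a
nonsingular tight square subsystem, is integral with entries bounded by Cramer's rule. -/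
theorem exists_int_le_mulVec_abs_le {J : Type*} [Fintype J] (B : Matrix J κ ℤ) (γ : J → ℤ)
    {M : ℤ} (hB : ∀ j q, |B j q| ≤ M) (hγ₀ : 0 ≤ γ) (hγ : ∀ j, γ j ≤ M)
    (hinj : ∀ d : κ → ℚ, B.map (↑) *ᵥ d = 0 → d = 0) {w : κ → ℚ}
    (hw : (fun j => (γ j : ℚ)) ≤ B.map (↑) *ᵥ w) :
    ∃ v : κ → ℤ, γ ≤ B *ᵥ v ∧ ∀ q, |v q| ≤ (Fintype.card κ).factorial * M ^ Fintype.card κ := by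
  obtain ⟨w, hw, hspan⟩ := exists_le_mulVec_span_tightRows_eq_top hinj hw
  obtain ⟨f, hf, hdet⟩ := exists_tightRows_det_ne_zero hspan
  set D := (B.submatrix f id).det
  have hD : ((D : ℤ) : ℚ) ≠ 0 := by
    rwa [Int.cast_det, ← submatrix_map]
  set u := (B.submatrix f id).cramer (γ ∘ f)
  have hu : ∀ q, (u q : ℚ) = D * w q := fun q => by
    have htight : (fun p => (γ (f p) : ℚ)) = (B.map (↑)).submatrix f id *ᵥ w :=
      funext fun p => ((Finset.mem_filter.1 (hf p)).2).symm
    rw [intCast_cramer, Int.cast_det, ← submatrix_map]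
    simp only [Function.comp_apply]
    rw [htight, cramer_mulVec]
    rfl
  have hD0 : D ≠ 0 := fun h => hD (by rw [h, Int.cast_zero])
  refine ⟨fun q => D.sign * u q, fun j => ?_, fun q => ?_⟩
  · have hv : (Int.cast ∘ fun q => D.sign * u q) = ((|D| : ℤ) : ℚ) • w := funext fun q => by
      simp only [Function.comp_apply, Int.cast_mul, hu, Pi.smul_apply, smul_eq_mul]
      rw [← mul_assoc, ← Int.cast_mul, Int.sign_mul_self, Int.natCast_natAbs]
    have hcast : (((B *ᵥ fun q => D.sign * u q) j : ℤ) : ℚ) =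
        (B.map (↑) *ᵥ (Int.cast ∘ fun q => D.sign * u q)) j :=
      (Int.castRingHom ℚ).map_mulVec B _ j
    rw [hv, mulVec_smul, Pi.smul_apply, smul_eq_mul] at hcast
    have h1 : (1 : ℚ) ≤ |D| := by exact_mod_cast Int.one_le_abs hD0
    have hγj : (0 : ℚ) ≤ γ j := by exact_mod_cast hγ₀ j
    have : (γ j : ℚ) ≤ ((B *ᵥ fun q => D.sign * u q) j : ℤ) := by
      rw [hcast]
      nlinarith [hw j]
    exact_mod_cast this
  · rw [abs_mul, Int.abs_sign_of_ne_zero hD0, one_mul]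
    exact abs_cramer_le (fun p q => hB (f p) q)
      (fun p => (abs_of_nonneg (hγ₀ (f p))).trans_le (hγ (f p))) q

end IntegerVertex

theorem exists_nat_one_le_mulVec {ι κ : Type*} [Fintype ι] [Fintype κ]
    (A : Matrix ι κ ℤ) {M : ℕ} (hM : 1 ≤ M) (hA : ∀ i q, |A i q| ≤ M)
    (hy : ∀ y : ι → ℚ, 0 ≤ y → y ᵥ* A.map (Int.cast : ℤ → ℚ) ≤ 0 → y = 0) :
    ∃ v : κ → ℕ, (∀ i, 1 ≤ (A *ᵥ fun q => (v q : ℤ)) i) ∧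
      ∀ q, v q ≤ (Fintype.card κ).factorial * M ^ Fintype.card κ := by
  obtain ⟨w, hw0, hw⟩ := exists_nonneg_le_mulVec (A.map (Int.cast : ℤ → ℚ)) hy 1
  have hmap : (fromRows A (1 : Matrix κ κ ℤ)).map (Int.cast : ℤ → ℚ) =
      fromRows (A.map (Int.cast : ℤ → ℚ)) 1 := by
    ext (i | i) j <;> simp [one_apply]
  obtain ⟨v, hv, hvb⟩ := exists_int_le_mulVec_abs_le (fromRows A (1 : Matrix κ κ ℤ))
    (Sum.elim 1 0) (M := M)
    (by
      rintro (i | i) j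
      · simpa using hA i j
      · by_cases h : i = j <;> simp [one_apply, h, hM])
    (by rintro (i | i) <;> simp)
    (by rintro (i | i) <;> simp [hM])
    (fun d hd => by simpa [hmap, fromRows_mulVec] using congr_arg (· ∘ Sum.inr) hd)
    (w := w) (by
      rw [hmap, fromRows_mulVec]
      rintro (i | i)
      exacts [by simpa using hw i, by simpa using hw0 i])
  have hv0 : ∀ q, 0 ≤ v q := fun q => by simpa [fromRows_mulVec] using hv (.inr q)
  refine ⟨fun q => (v q).toNat, fun i => ?_, fun q => ?_⟩
  · simpa [fromRows_mulVec, Int.toNat_of_nonneg (hv0 _)] using hv (.inl i)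
  · have := hvb q
    rw [abs_of_nonneg (hv0 q)] at this
    exact Int.toNat_le.2 (by exact_mod_cast this)

lemma exists_natCast_eq_mul_of_nonneg {ι : Type*} [Fintype ι] (y : ι → ℚ) (hy : 0 ≤ y) :
    ∃ N : ℕ, 0 < N ∧ ∃ z : ι → ℕ, ∀ i, (z i : ℚ) = N * y i := by
  set N := ∏ i, (y i).den
  refine ⟨N, Finset.prod_pos fun i _ => (y i).den_pos,
    fun i => N / (y i).den * (y i).num.toNat, fun i => ?_⟩
  have hdvd : (y i).den ∣ N := Finset.dvd_prod_of_mem _ (Finset.mem_univ i)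
  have hnum : (((y i).num.toNat : ℕ) : ℚ) = (y i).num := by
    exact_mod_cast Int.toNat_of_nonneg (Rat.num_nonneg.2 (hy i))
  rw [Nat.cast_mul, Nat.cast_div hdvd (by positivity), hnum, div_mul_eq_mul_div, mul_div_assoc,
    Rat.num_div_den]

lemma sub_one_mul_factorial_mul_pow_le {M n : ℕ} (hM : 2 ≤ M) (hn : n ≤ M) :
    (M - 1) * (n.factorial * M ^ n) ≤ 2 ^ (6 * M * Nat.log 2 M) := by
  set L := Nat.log 2 M
  have hL : 1 ≤ L := Nat.le_log_of_pow_le one_lt_two (by simpa using hM)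
  have hML : M ≤ 2 ^ (L + 1) := (Nat.lt_pow_succ_log_self one_lt_two M).le
  have hpow : M ^ n ≤ M ^ M := Nat.pow_le_pow_right (by omega) hn
  have hfact : n.factorial ≤ M ^ M := n.factorial_le_pow.trans
    ((Nat.pow_le_pow_left hn n).trans hpow)
  calc (M - 1) * (n.factorial * M ^ n) ≤ M * (M ^ M * M ^ M) := by gcongr; omega
    _ = M ^ (2 * M + 1) := by ring
    _ ≤ (2 ^ (L + 1)) ^ (2 * M + 1) := Nat.pow_le_pow_left hML _
    _ = 2 ^ ((L + 1) * (2 * M + 1)) := (pow_mul _ _ _).symm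
    _ ≤ 2 ^ (6 * M * L) := Nat.pow_le_pow_right two_pos (by nlinarith)

namespace PaperPP

section Dynamics
variable {σ : Type} {P : PopComputer σ}

open Relation

lemma step_add_of_mem {t : Multiset σ × Multiset σ} (ht : t ∈ P.δ) (X : Multiset σ) :
    Step P (X + t.1) (X + t.2) :=
  ⟨t, ht, Multiset.le_add_left _ _, by rw [add_tsub_cancel_right]⟩

lemma Step.add_right {C D : Multiset σ} (h : Step P C D) (X : Multiset σ) :
    Step P (C + X) (D + X) := by
  obtain ⟨t, ht, hle, rfl⟩ := h
  refine ⟨t, ht, hle.trans (Multiset.le_add_right _ _), ?_⟩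
  rw [add_right_comm, tsub_add_eq_add_tsub hle]

lemma Reaches.add_right {C D : Multiset σ} (h : Reaches P C D) (X : Multiset σ) :
    Reaches P (C + X) (D + X) := by
  induction h with
  | refl => exact .refl
  | tail _ hs ih => exact ih.tail (hs.add_right X)

lemma reaches_add_nsmul {t : Multiset σ × Multiset σ} (ht : t ∈ P.δ) (X : Multiset σ) (k : ℕ) :
    Reaches P (X + k • t.1) (X + k • t.2) := by
  induction k generalizing X with
  | zero => exact .refl
  | succ k ih =>
    rw [succ_nsmul', succ_nsmul', ← add_assoc, ← add_assoc]
    exact .head (step_add_of_mem ht X |>.add_right _) (ih (X + t.2))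

lemma reaches_add_sum_nsmul {ι : Type*} {T : Finset ι} {t : ι → Multiset σ × Multiset σ}
    (ht : ∀ i ∈ T, t i ∈ P.δ) (y : ι → ℕ) (X : Multiset σ) :
    Reaches P (X + ∑ i ∈ T, y i • (t i).1) (X + ∑ i ∈ T, y i • (t i).2) := by
  induction T using Finset.induction_on generalizing X with
  | empty => exact .refl
  | insert a T ha ih =>
    rw [Finset.sum_insert ha, Finset.sum_insert ha, ← add_assoc, ← add_assoc]
    exact ((reaches_add_nsmul (ht a (Finset.mem_insert_self a T)) X _).add_right _).trans
      (ih (fun i hi => ht i (Finset.mem_insert_of_mem hi)) _)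

lemma transGen_add_sum_nsmul {ι : Type*} {T : Finset ι} {t : ι → Multiset σ × Multiset σ}
    (ht : ∀ i ∈ T, t i ∈ P.δ) {y : ι → ℕ} {i₀ : ι} (hi₀ : i₀ ∈ T) (hy : y i₀ ≠ 0)
    (X : Multiset σ) :
    TransGen (Step P) (X + ∑ i ∈ T, y i • (t i).1) (X + ∑ i ∈ T, y i • (t i).2) := by
  obtain ⟨k, hk⟩ := Nat.exists_eq_succ_of_ne_zero hy
  rw [← Finset.add_sum_erase T _ hi₀, ← Finset.add_sum_erase T _ hi₀, hk, succ_nsmul',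
    succ_nsmul']
  simp only [← add_assoc]
  refine .head' (b := X + (t i₀).2 + k • (t i₀).1 + ∑ i ∈ T.erase i₀, y i • (t i).1) ?_ ?_
  · convert step_add_of_mem (ht i₀ hi₀) (X + k • (t i₀).1 + ∑ i ∈ T.erase i₀, y i • (t i).1)
      using 1 <;> abel
  · exact ((reaches_add_nsmul (ht i₀ hi₀) _ k).add_right _).trans
      (reaches_add_sum_nsmul (fun i hi => ht i (Finset.mem_of_mem_erase hi)) y _)

lemma not_bounded_of_transGen_add {C₀ C E : Multiset σ}
    (hC₀ : ∃ CI, IsInput P CI ∧ Initial P CI C₀) (h₀ : Reaches P C₀ C)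
    (hloop : TransGen (Step P) C (C + E)) : ¬ Bounded P := by
  set S := {D | ∃ k : ℕ, TransGen (Step P) D (C + k • E)}
  have hS : ∀ D ∈ S, ∃ D' ∈ S, Step P D D' := by
    rintro D ⟨k, hk⟩
    obtain ⟨D', hDD', hD'⟩ := TransGen.head'_iff.1 hk
    refine ⟨D', ⟨k + 1, TransGen.trans_right hD' ?_⟩, hDD'⟩
    rw [succ_nsmul', ← add_assoc]
    exact TransGen.lift (· + k • E) (fun _ _ h => h.add_right _) _ _ hloop
  have hacc : ∀ D, Acc (flip (Step P)) D → D ∉ S := fun D hD => by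
    induction hD with
    | intro D _ ih =>
      intro hDS
      obtain ⟨D', hD'S, hDD'⟩ := hS D hDS
      exact ih D' hDD' hD'S
  obtain ⟨f, hf₀, hf⟩ := not_acc_iff_exists_descending_chain.1 fun h =>
    hacc C₀ h ⟨1, by rw [one_nsmul]; exact TransGen.trans_right h₀ hloop⟩
  exact fun hb => hb ⟨f, hf₀ ▸ hC₀, hf⟩

lemma ReachableConfig.add {C D : Multiset σ} (hC : ReachableConfig P C)
    (hD : ReachableConfig P D) : ReachableConfig P (C + D) := by
  obtain ⟨CI, _, hCI, ⟨CH, hCH, hHCH, rfl⟩, hC⟩ := hC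
  obtain ⟨DI, _, hDI, ⟨DH, hDH, hHDH, rfl⟩, hD⟩ := hD
  refine ⟨CI + DI, CI + DI + (CH + DH), ?_, ⟨CH + DH, ?_, ?_, rfl⟩, ?_⟩
  · simpa [IsInput, or_imp, forall_and] using ⟨hCI, hDI⟩
  · simpa [or_imp, forall_and] using ⟨hCH, hDH⟩
  · exact hHCH.trans (Multiset.le_add_right _ _)
  · rw [add_add_add_comm]
    have hD' : Reaches P (C + (DI + DH)) (C + D) := by
      simpa only [add_comm C] using hD.add_right C
    exact (hC.add_right _).trans hD'

lemma reachableConfig_H : ReachableConfig P P.H :=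
  ⟨0, P.H, fun _ h => absurd h (Multiset.notMem_zero _), ⟨P.H, fun _ h => h, le_rfl,
    (zero_add _).symm⟩, .refl⟩

lemma exists_reachableConfig_le (hcov : ∀ q ∈ P.Q, ∃ C, ReachableConfig P C ∧ q ∈ C)
    (R : Multiset σ) (hR : ∀ q ∈ R, q ∈ P.Q) : ∃ C, ReachableConfig P C ∧ R ≤ C := by
  induction R using Multiset.induction_on with
  | empty => exact ⟨P.H, reachableConfig_H, Multiset.zero_le _⟩
  | cons q R ih =>
    obtain ⟨C, hC, hqC⟩ := hcov q (hR q (Multiset.mem_cons_self q R))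
    obtain ⟨D, hD, hRD⟩ := ih fun x hx => hR x (Multiset.mem_cons_of_mem hx)
    refine ⟨C + D, hC.add hD, ?_⟩
    rw [← Multiset.singleton_add]
    exact add_le_add (Multiset.singleton_le.2 hqC) hRD

end Dynamics

section Bounded
variable {σ : Type} {P : PopComputer σ}

lemma Bounded.eq_zero_of_sum_nsmul_le (hb : Bounded P)
    (hcov : ∀ q ∈ P.Q, ∃ C, ReachableConfig P C ∧ q ∈ C) (y : P.δ → ℕ)
    (hle : ∑ t, y t • t.1.1 ≤ ∑ t, y t • t.1.2) : y = 0 := by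
  by_contra hy
  obtain ⟨t₀, ht₀⟩ := Function.ne_iff.1 hy
  set R := ∑ t, y t • t.1.1
  obtain ⟨C, ⟨CI, C₀, hCI, hC₀, hreach⟩, hRC⟩ := exists_reachableConfig_le hcov R fun q hq => by
    obtain ⟨t, -, hq⟩ := Multiset.mem_sum.1 hq
    exact P.delta_mem t.1 t.2 q (Multiset.mem_add.2 (.inl (Multiset.mem_nsmul.1 hq).2))
  have hloop := transGen_add_sum_nsmul (T := Finset.univ) (t := Subtype.val) (fun t _ => t.2)
    (Finset.mem_univ t₀) ht₀ (C - R)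
  rw [tsub_add_cancel_of_le hRC, tsub_add_eq_add_tsub hRC, add_tsub_assoc_of_le hle] at hloop
  exact not_bounded_of_transGen_add ⟨CI, hCI, hC₀⟩ hreach hloop hb

def consumption [DecidableEq σ] (P : PopComputer σ) : Matrix P.δ P.Q ℤ :=
  fun t q => (t.1.1.count q.1 : ℤ) - t.1.2.count q.1

lemma Bounded.eq_zero_of_vecMul_nonpos [DecidableEq σ] (hb : Bounded P)
    (hcov : ∀ q ∈ P.Q, ∃ C, ReachableConfig P C ∧ q ∈ C) (y : P.δ → ℚ) (hy : 0 ≤ y)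
    (hyA : y ᵥ* (consumption P).map (Int.cast : ℤ → ℚ) ≤ 0) : y = 0 := by
  obtain ⟨N, hN, z, hz⟩ := exists_natCast_eq_mul_of_nonneg y hy
  have hz0 := hb.eq_zero_of_sum_nsmul_le hcov z <| Multiset.le_iff_count.2 fun q => by
    simp only [Multiset.count_sum', Multiset.count_nsmul]
    by_cases hq : q ∈ P.Q
    · have hsum : ∀ u : P.δ → ℚ, ∑ t, (z t : ℚ) * u t = N * ∑ t, y t * u t := fun u => by
        simp only [hz, Finset.mul_sum, mul_assoc]
      have := hyA ⟨q, hq⟩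
      simp only [vecMul, dotProduct, consumption, Matrix.map_apply, Pi.zero_apply, Int.cast_sub,
        Int.cast_natCast, mul_sub, Finset.sum_sub_distrib, sub_nonpos] at this
      have : ∑ t, (z t : ℚ) * (t.1.1.count q : ℚ) ≤ ∑ t, (z t : ℚ) * (t.1.2.count q : ℚ) := by
        rw [hsum, hsum]
        exact mul_le_mul_of_nonneg_left this (Nat.cast_nonneg N)
      exact_mod_cast this
    · have hcount : ∀ t : P.δ, t.1.1.count q = 0 := fun t =>
        Multiset.count_eq_zero.2 fun h => hq (P.delta_mem t.1 t.2 q (Multiset.mem_add.2 (.inl h)))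
      simp [hcount]
  funext t
  have := hz t
  rw [hz0, Pi.zero_apply, Nat.cast_zero, zero_eq_mul] at this
  exact this.resolve_left (Nat.cast_ne_zero.2 hN.ne')

end Bounded

section Potential
variable {σ : Type} {P : PopComputer σ}

lemma mweight_add (w : σ → ℕ) (C D : Multiset σ) :
    mweight w (C + D) = mweight w C + mweight w D := by
  simp [mweight]

lemma IsPotential.bounded {w : σ → ℕ} (hw : IsPotential P w) : Bounded P := by
  rintro ⟨f, -, hf⟩
  obtain ⟨n, hn⟩ := WellFounded.not_rel_apply_succ (r := (· < ·)) fun n => mweight w (f n)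
  obtain ⟨t, ht, hle, heq⟩ := hf n
  have hpot := hw t ht
  have hcard := (P.delta_card t ht).2
  have hsplit := mweight_add w (f n - t.1) t.1
  rw [tsub_add_cancel_of_le hle] at hsplit
  apply hn
  show mweight w (f (n + 1)) < mweight w (f n)
  rw [heq, mweight_add, hsplit]
  omega

lemma mweight_eq_sum_count [DecidableEq σ] (w : σ → ℕ) {C : Multiset σ} {F : Finset σ}
    (hC : ∀ q ∈ C, q ∈ F) : mweight w C = ∑ q ∈ F, C.count q * w q := by
  rw [mweight, Finset.sum_multiset_map_count]
  simp only [smul_eq_mul]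
  exact Finset.sum_subset (fun q hq => hC q (Multiset.mem_toFinset.1 hq)) fun q _ hq => by
    rw [Multiset.count_eq_zero.2 (mt Multiset.mem_toFinset.2 hq), zero_mul]

lemma isPotential_of_one_le_consumption_mulVec [DecidableEq σ] (v : P.Q → ℕ)
    (hv : ∀ t, 1 ≤ (consumption P *ᵥ fun q => (v q : ℤ)) t) {M : ℕ}
    (hM : ∀ t ∈ P.δ, Multiset.card t.1 ≤ M) :
    IsPotential P fun q => if h : q ∈ P.Q then (M - 1) * v ⟨q, h⟩ else 0 := by
  intro t ht
  have hweight : ∀ C : Multiset σ, (∀ q ∈ C, q ∈ P.Q) →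
      mweight (fun q => if h : q ∈ P.Q then (M - 1) * v ⟨q, h⟩ else 0) C =
        (M - 1) * ∑ q : P.Q, C.count q.1 * v q := fun C hC => by
    rw [mweight_eq_sum_count _ hC, ← Finset.sum_coe_sort, Finset.mul_sum]
    exact Finset.sum_congr rfl fun q _ => by rw [dif_pos q.2]; ring
  rw [hweight t.1 fun q hq => P.delta_mem t ht q (Multiset.mem_add.2 (.inl hq)),
    hweight t.2 fun q hq => P.delta_mem t ht q (Multiset.mem_add.2 (.inr hq))]
  set a := ∑ q : P.Q, t.1.count q.1 * v q
  set b := ∑ q : P.Q, t.2.count q.1 * v q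
  have hab : b + 1 ≤ a := by
    have h := hv ⟨t, ht⟩
    simp only [mulVec, dotProduct, consumption, sub_mul, Finset.sum_sub_distrib] at h
    zify
    push_cast [a, b]
    linarith
  have hcard := hM t ht
  calc (M - 1) * b + (Multiset.card t.1 - 1) ≤ (M - 1) * (b + 1) := by rw [mul_add]; omega
    _ ≤ (M - 1) * a := Nat.mul_le_mul_left _ hab

end Potential

section Size
variable {σ : Type} [DecidableEq σ] (P : PopComputer σ)

lemma card_Q_le_csize : P.Q.card ≤ csize P := by
  unfold csize; omega

lemma card_le_csize {t : Multiset σ × Multiset σ} (ht : t ∈ P.δ) :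
    Multiset.card t.1 ≤ csize P :=
  (Finset.single_le_sum (f := fun u => Multiset.card u.1) (fun _ _ => Nat.zero_le _) ht).trans
    (by unfold csize; omega)

lemma abs_consumption_le_csize (t : P.δ) (q : P.Q) : |consumption P t q| ≤ csize P := by
  have h₁ := Multiset.count_le_card q.1 t.1.1
  have h₂ := Multiset.count_le_card q.1 t.1.2
  have hcard := (P.delta_card t.1 t.2).1
  have hle := card_le_csize P t.2
  rw [consumption, abs_le]
  constructor <;> omega

end Size

theorem Bounded.exists_isPotential {σ : Type} [DecidableEq σ] {P : PopComputer σ} (hb : Bounded P)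
    (hcov : ∀ q ∈ P.Q, ∃ C, ReachableConfig P C ∧ q ∈ C) (hm : 1 ≤ csize P) :
    ∃ w, IsPotential P w ∧
      ∀ q ∈ P.Q, w q ≤ (csize P - 1) * (P.Q.card.factorial * csize P ^ P.Q.card) := by
  obtain ⟨v, hv, hvle⟩ := exists_nat_one_le_mulVec (consumption P) hm
    (abs_consumption_le_csize P) (hb.eq_zero_of_vecMul_nonpos hcov)
  refine ⟨_, isPotential_of_one_le_consumption_mulVec v hv fun t => card_le_csize P, fun q hq => ?_⟩
  rw [dif_pos hq, ← Fintype.card_coe]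
  exact Nat.mul_le_mul_left _ (hvle _)

/-- Lemma 6.2: boundedness is equivalent to existence of a small potential function. -/
theorem stmt8 :
    ∃ c : ℕ, 0 < c ∧
      ∀ (σ : Type) [DecidableEq σ] (P : PopComputer σ),
        2 ≤ csize P →
        (∀ q ∈ P.Q, ∃ C, ReachableConfig P C ∧ q ∈ C) →
        (Bounded P ↔ ∃ w : σ → ℕ, IsPotential P w ∧
          ∀ q ∈ P.Q, w q ≤ 2 ^ (c * csize P * Nat.log 2 (csize P))) := by
  refine ⟨6, by norm_num, fun σ _ P hm hcov => ⟨fun hb => ?_, fun ⟨w, hw, _⟩ => hw.bounded⟩⟩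
  obtain ⟨w, hw, hwle⟩ := hb.exists_isPotential hcov (by omega)
  exact ⟨w, hw, fun q hq =>
    (hwle q hq).trans (sub_one_mul_factorial_mul_pow_le hm (card_Q_le_csize P))⟩

end PaperPP
end
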